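/- Let S = ℕ𝒜 be a numerical semigroup of Northcott type with generators a_1,…,a_n, exponents u_{ij} > 0, σ = (1 2 ⋯ n−1), and N = ∑_{i=1}^{n-1}(u_{ni}+u_{σ(i),i}−1)·a_i. Then the Frobenius number of S is F(S) = N − min{ u_{σ(j),j}·a_j : j ∈ {1,…,n−1} } − a_n. -/

import Mathlib

open MvPolynomial

/-- `σ` : the cycle `(1 2 ⋯ n−1)` in 0-based indexing on `{0,…,n-2}`. -/
def ntSig (n i : ℕ) : ℕ := if i = n - 2 then 0 else i + 1

/-- `σ⁻¹` in 0-based indexing on `{0,…,n-2}`. -/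
def ntTau (n i : ℕ) : ℕ := if i = 0 then n - 2 else i - 1

/-- The Northcott binomial `f_i = x_i^{u_{ni}+u_{σ(i),i}} − x_{σ⁻¹(i)}^{u_{i,σ⁻¹(i)}} x_n^{u_{in}}`
(0-based: index `n-1` plays the role of the paper's `n`). -/
noncomputable def ntF (K : Type*) [Field K] (n : ℕ) (hn : 3 ≤ n) (u : ℕ → ℕ → ℕ)
    (i : Fin (n - 1)) : MvPolynomial (Fin n) K :=
  X (⟨(i : ℕ), by have := i.isLt; omega⟩ : Fin n) ^ (u (n - 1) i + u (ntSig n i) i)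
    - X (⟨ntTau n i, by have := i.isLt; unfold ntTau; split <;> omega⟩ : Fin n) ^ (u i (ntTau n i))
      * X (⟨n - 1, by omega⟩ : Fin n) ^ (u i (n - 1))

/-- The Northcott binomial `D = x_1^{u_{n1}}⋯x_{n-1}^{u_{n,n-1}} − x_n^{∑ u_{in}}`. -/
noncomputable def ntD (K : Type*) [Field K] (n : ℕ) (hn : 3 ≤ n) (u : ℕ → ℕ → ℕ) :
    MvPolynomial (Fin n) K :=
  (∏ i : Fin (n - 1), X (⟨(i : ℕ), by have := i.isLt; omega⟩ : Fin n) ^ (u (n - 1) i))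
    - X (⟨n - 1, by omega⟩ : Fin n) ^ (∑ i : Fin (n - 1), u (i : ℕ) (n - 1))

/-- The critical ideal of Northcott type `⟨f_1,…,f_{n-1},D⟩`. -/
noncomputable def ntIdeal (K : Type*) [Field K] (n : ℕ) (hn : 3 ≤ n) (u : ℕ → ℕ → ℕ) :
    Ideal (MvPolynomial (Fin n) K) :=
  Ideal.span (Set.range (ntF K n hn u) ∪ {ntD K n hn u})

/-- Positivity of the relevant exponents `u_{ij} > 0`. -/
def ntPos (n : ℕ) (u : ℕ → ℕ → ℕ) : Prop :=
  ∀ i, i < n - 1 → 0 < u (n - 1) i ∧ 0 < u i (n - 1) ∧ 0 < u i (ntTau n i) ∧ 0 < u (ntSig n i) i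

/-!
Write `b_i = a_i` for `i < n` and `c = a_n`. The binomials `f_i`, and `D` once every exponent
reaches `u_{ni}`, rewrite any exponent vector of the `b_i`, at the cost of multiples of `c`, into
a reduced one: `l_i < u_{ni} + u_{σ(i)i}` for all `i` and `l_j < u_{nj}` for some `j`. Since
`z + q c ∈ S` for large `q`, every integer `z` is congruent modulo `c` to the value of a reduced
vector; that value is at most `N - μ` with `μ = min_j u_{σ(j)j} a_j`, hence at most `z` when
`z > N - μ - c`, and then `z ∈ S`.

Conversely, since the kernel is generated by the `f_i` and `D`, the exponent vectors of any two
monomials of equal degree differ by an integer combination `∑ m_i e_i` of the exponent vectors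
`e_i` of the `f_i`. Between two reduced vectors all `m_i` vanish: the maximum of `m` propagates
along the cycle `σ` and then contradicts `l_j < u_{nj}`. The reduced vector of value exactly
`N - μ` is therefore not a reduced vector plus a positive multiple of `c`, which is what
`N - μ - c ∈ S` would give.
-/

theorem Equiv.Perm.SameCycle.mem_of_mapsTo {α : Type*} [Finite α] {f : Equiv.Perm α}
    {s : Set α} {x y : α} (h : f.SameCycle x y) (hs : Set.MapsTo f s s) (hx : x ∈ s) : y ∈ s := by
  obtain ⟨k, rfl⟩ := h.exists_nat_pow_eq
  rw [Equiv.Perm.coe_pow]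
  exact hs.iterate k hx

theorem sameCycle_finRotate {m : ℕ} (hm : 2 ≤ m) (i j : Fin m) : (finRotate m).SameCycle i j := by
  have hmov (k : Fin m) : finRotate m k ≠ k :=
    Equiv.Perm.mem_support.1 (support_finRotate_of_le hm ▸ Finset.mem_univ k)
  exact (isCycle_finRotate_of_le hm).sameCycle (hmov i) (hmov j)

theorem Fintype.prod_pow_pi_single {ι M : Type*} [Fintype ι] [DecidableEq ι] [CommMonoid M]
    (x : ι → M) (i : ι) (e : ℕ) : ∏ j, x j ^ Pi.single i e j = x i ^ e := by
  rw [Fintype.prod_eq_single i fun j hj => by simp [hj]]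
  simp

theorem Fintype.sum_add_pi_single_mul {ι R : Type*} [Fintype ι] [DecidableEq ι]
    [NonUnitalNonAssocSemiring R] (l b : ι → R) (j : ι) (x : R) :
    ∑ i, (l + Pi.single j x : ι → R) i * b i = ∑ i, l i * b i + x * b j := by
  simp [add_mul, Finset.sum_add_distrib, Pi.single_apply]

theorem Fin.sum_snoc_mul {m : ℕ} (l : Fin m → ℕ) (k : ℕ) (a : Fin (m + 1) → ℕ) :
    ∑ j, (Fin.snoc l k : Fin (m + 1) → ℕ) j * a j
      = ∑ i, l i * a i.castSucc + k * a (Fin.last m) := by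
  simp [Fin.sum_univ_castSucc]

theorem mem_closure_range_fin_succ_iff {m : ℕ} (a : Fin (m + 1) → ℕ) (s : ℕ) :
    s ∈ AddSubmonoid.closure (Set.range a) ↔
      ∃ (l : Fin m → ℕ) (k : ℕ), s = ∑ i, l i * a i.castSucc + k * a (Fin.last m) := by
  simp only [AddSubmonoid.mem_closure_range_iff_of_fintype, smul_eq_mul]
  constructor
  · rintro ⟨ν, rfl⟩
    exact ⟨fun i => ν i.castSucc, ν (Fin.last m), Fin.sum_univ_castSucc _⟩
  · rintro ⟨l, k, rfl⟩
    exact ⟨Fin.snoc l k, (Fin.sum_snoc_mul l k a).symm⟩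

theorem exists_forall_ge_mem_closure_range {ι : Type*} [Fintype ι] {a : ι → ℕ}
    (ha : Finset.univ.gcd a = 1) : ∃ K, ∀ s ≥ K, s ∈ AddSubmonoid.closure (Set.range a) := by
  obtain ⟨K, hK⟩ := Nat.exists_mem_closure_of_ge (Set.range a)
  have hgcd : Nat.setGcd (Set.range a) ∣ 1 :=
    ha ▸ Finset.dvd_gcd fun i _ => Nat.setGcd_dvd_of_mem ⟨i, rfl⟩
  exact ⟨K, fun s hs => hK s hs (hgcd.trans (one_dvd s))⟩

namespace Northcott

variable {ι : Type*} [Fintype ι]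

def Reduced (u v l : ι → ℕ) : Prop :=
  (∀ i, l i < u i + v i) ∧ ∃ j, l j < u j

/-- In the paper's notation `b i = a_i`, `c = a_n`, `u i = u_{ni}`, `v i = u_{σ(i)i}` and
`p i = u_{in}`; `relation i` is the binomial `f_i`, and `exists_coeff` says that every relation
between two monomials is an integer combination of the `f_i`. -/
structure IsPresentation (σ : Equiv.Perm ι) (u v p b : ι → ℕ) (c : ℕ) : Prop where
  relation : ∀ i, (u i + v i) * b i = v (σ.symm i) * b (σ.symm i) + p i * c
  exists_coeff : ∀ (l l' : ι → ℕ) (k k' : ℕ),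
    ∑ i, l i * b i + k * c = ∑ i, l' i * b i + k' * c →
      ∃ m : ι → ℤ, (∀ i, (l i : ℤ) - l' i = m i * (u i + v i) - m (σ i) * v i) ∧
        (k : ℤ) - k' = -∑ i, m i * p i

variable {σ : Equiv.Perm ι} {u v b p l : ι → ℕ} {c : ℕ}

theorem sum_mul_eq_of_relation
    (hrel : ∀ i, (u i + v i) * b i = v (σ.symm i) * b (σ.symm i) + p i * c) :
    ∑ i, u i * b i = (∑ i, p i) * c := by
  have hsum := Finset.sum_congr rfl fun i (_ : i ∈ Finset.univ) => hrel i
  simp only [add_mul, Finset.sum_add_distrib, Finset.sum_mul] at hsum ⊢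
  rw [Equiv.sum_comp σ.symm fun i => v i * b i] at hsum
  omega

theorem exists_sum_mul_eq_add_of_not_reduced [Nonempty ι] (hp : ∀ i, 0 < p i)
    (hrel : ∀ i, (u i + v i) * b i = v (σ.symm i) * b (σ.symm i) + p i * c)
    (hl : ¬ Reduced u v l) :
    ∃ l' : ι → ℕ, ∃ k > 0, ∑ i, l i * b i = ∑ i, l' i * b i + k * c := by
  classical
  by_cases hbox : ∀ i, l i < u i + v i
  · have hul : u ≤ l := fun j => not_lt.1 fun hj => hl ⟨hbox, j, hj⟩
    refine ⟨l - u, ∑ i, p i, Finset.sum_pos (fun i _ => hp i) Finset.univ_nonempty, ?_⟩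
    rw [← sum_mul_eq_of_relation hrel, ← Finset.sum_add_distrib]
    refine Finset.sum_congr rfl fun i _ => ?_
    rw [← add_mul, Pi.sub_apply, Nat.sub_add_cancel (hul i)]
  · obtain ⟨i, hi⟩ := not_forall.1 hbox
    set l₀ := l - Pi.single i (u i + v i)
    have hl₀ : l = l₀ + Pi.single i (u i + v i) := by
      funext j
      rcases eq_or_ne j i with rfl | hj
      · simp only [l₀, Pi.add_apply, Pi.sub_apply, Pi.single_eq_same]
        omega
      · simp [l₀, hj]
    refine ⟨l₀ + Pi.single (σ.symm i) (v (σ.symm i)), p i, hp i, ?_⟩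
    rw [hl₀, Fintype.sum_add_pi_single_mul, Fintype.sum_add_pi_single_mul, hrel, add_assoc]

theorem exists_reduced [Nonempty ι] (hp : ∀ i, 0 < p i) (hc : 0 < c)
    (hrel : ∀ i, (u i + v i) * b i = v (σ.symm i) * b (σ.symm i) + p i * c) (l : ι → ℕ) :
    ∃ l' k, Reduced u v l' ∧ ∑ i, l i * b i = ∑ i, l' i * b i + k * c := by
  induction hV : ∑ i, l i * b i using Nat.strong_induction_on generalizing l with
  | _ V ih =>
    by_cases hl : Reduced u v l
    · exact ⟨l, 0, hl, by simp [hV]⟩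
    obtain ⟨l₁, k₁, hk₁, hl₁⟩ := exists_sum_mul_eq_add_of_not_reduced hp hrel hl
    have := Nat.mul_pos hk₁ hc
    obtain ⟨l', k, hl', h⟩ := ih _ (by omega) l₁ rfl
    exact ⟨l', k + k₁, hl', by rw [← hV, hl₁, h]; ring⟩

theorem sum_mul_add_le (hl : Reduced u v l) {μ : ℕ} (hμ : ∀ j, μ ≤ v j * b j) :
    ∑ i, l i * b i + μ ≤ ∑ i, (u i + v i - 1) * b i := by
  classical
  obtain ⟨hbox, j, hj⟩ := hl
  calc ∑ i, l i * b i + μ ≤ ∑ i, l i * b i + v j * b j := by gcongr; exact hμ j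
    _ = ∑ i, (l + Pi.single j (v j) : ι → ℕ) i * b i := (Fintype.sum_add_pi_single_mul l b j _).symm
    _ ≤ ∑ i, (u i + v i - 1) * b i := by
      gcongr with i
      rcases eq_or_ne i j with rfl | hij
      · simp only [Pi.add_apply, Pi.single_eq_same]
        omega
      · simpa [hij] using Nat.le_sub_one_of_lt (hbox i)

theorem exists_reduced_sum_mul_add_eq (hu : ∀ i, 0 < u i) (j : ι) :
    ∃ l, Reduced u v l ∧ ∑ i, l i * b i + v j * b j = ∑ i, (u i + v i - 1) * b i := by
  classical
  set l : ι → ℕ := (fun i => u i + v i - 1) - Pi.single j (v j)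
  have hl : l + Pi.single j (v j) = fun i => u i + v i - 1 := by
    funext i
    rcases eq_or_ne i j with rfl | hij
    · simp only [l, Pi.add_apply, Pi.sub_apply, Pi.single_eq_same]
      have := hu i
      omega
    · simp [l, hij]
  refine ⟨l, ⟨fun i => ?_, j, ?_⟩, ?_⟩
  · have hi := congrFun hl i
    simp only [Pi.add_apply] at hi
    have := hu i
    omega
  · have hj := congrFun hl j
    simp only [Pi.add_apply, Pi.single_eq_same] at hj
    have := hu j
    omega
  · rw [← Fintype.sum_add_pi_single_mul, hl]

theorem le_zero_of_relation (hσ : ∀ i j, σ.SameCycle i j) {l l' : ι → ℕ} {m : ι → ℤ}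
    (hl : Reduced u v l)
    (hm : ∀ i, (l i : ℤ) - l' i = m i * (u i + v i) - m (σ i) * v i) (i : ι) : m i ≤ 0 := by
  obtain ⟨hbox, j, hj⟩ := hl
  have : Nonempty ι := ⟨i⟩
  obtain ⟨i₀, hi₀⟩ := Finite.exists_max m
  by_contra! hpos
  have hM : 0 < m i₀ := hpos.trans_le (hi₀ i)
  -- If `m k` is maximal but `m (σ k)` is not, then `l k - l' k ≥ m k * u k + v k ≥ u k + v k`.
  have hmaps : Set.MapsTo σ {k | m k = m i₀} {k | m k = m i₀} := by
    intro k (hk : m k = m i₀)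
    refine le_antisymm (hi₀ _) (not_lt.mp fun hlt => ?_)
    have := hm k
    have := hbox k
    have hv : (0 : ℤ) ≤ v k := by positivity
    nlinarith [mul_le_mul_of_nonneg_right (Int.le_sub_one_of_lt hlt) hv]
  have hmj : m j = m i₀ := (hσ i₀ j).mem_of_mapsTo hmaps rfl
  have hmσj : m (σ j) = m i₀ := (hσ i₀ (σ j)).mem_of_mapsTo hmaps rfl
  have := hm j
  rw [hmj, hmσj] at this
  have hu : (0 : ℤ) ≤ u j := by positivity
  nlinarith

theorem eq_zero_of_relation (hσ : ∀ i j, σ.SameCycle i j) {l l' : ι → ℕ} {m : ι → ℤ}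
    (hl : Reduced u v l) (hl' : Reduced u v l')
    (hm : ∀ i, (l i : ℤ) - l' i = m i * (u i + v i) - m (σ i) * v i) : m = 0 := by
  have hm' (i : ι) : (l' i : ℤ) - l i = (-m) i * (u i + v i) - (-m) (σ i) * v i := by
    simp only [Pi.neg_apply]
    linarith [hm i]
  funext i
  exact le_antisymm (le_zero_of_relation hσ hl hm i)
    (neg_nonpos.mp (le_zero_of_relation hσ hl' hm' i))

variable {S : AddSubmonoid ℕ}

theorem not_exists_mem_eq (hP : IsPresentation σ u v p b c)
    (hS : ∀ s, s ∈ S ↔ ∃ (l : ι → ℕ) (k : ℕ), s = ∑ i, l i * b i + k * c)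
    (hσ : ∀ i j, σ.SameCycle i j) (hu : ∀ i, 0 < u i) (hp : ∀ i, 0 < p i) (hc : 0 < c)
    (j₀ : ι) :
    ¬ ∃ s ∈ S, (s : ℤ) = ∑ i, (((u i + v i - 1) * b i : ℕ) : ℤ) - (v j₀ * b j₀ : ℕ) - c := by
  have : Nonempty ι := ⟨j₀⟩
  rintro ⟨s, hs, hsF⟩
  obtain ⟨ν, k, rfl⟩ := (hS s).1 hs
  obtain ⟨l', k', hl', hν⟩ := exists_reduced hp hc hP.relation ν
  obtain ⟨l, hl, hlN⟩ := exists_reduced_sum_mul_add_eq (b := b) (v := v) hu j₀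
  obtain ⟨m, hm, hk⟩ := hP.exists_coeff l l' 0 (k' + k + 1) (by
    rw [← Nat.cast_sum, ← hlN, hν] at hsF
    push_cast at hsF
    linarith)
  rw [eq_zero_of_relation hσ hl hl' hm] at hk
  simp only [Pi.zero_apply, zero_mul, Finset.sum_const_zero, neg_zero] at hk
  omega

theorem exists_mem_eq_of_lt [Nonempty ι]
    (hrel : ∀ i, (u i + v i) * b i = v (σ.symm i) * b (σ.symm i) + p i * c)
    (hS : ∀ s, s ∈ S ↔ ∃ (l : ι → ℕ) (k : ℕ), s = ∑ i, l i * b i + k * c)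
    (hK : ∃ K, ∀ s ≥ K, s ∈ S) (hp : ∀ i, 0 < p i) (hc : 0 < c) {μ : ℕ}
    (hμ : ∀ j, μ ≤ v j * b j) {z : ℤ}
    (hz : ∑ i, (((u i + v i - 1) * b i : ℕ) : ℤ) - μ - c < z) :
    ∃ s ∈ S, (s : ℤ) = z := by
  obtain ⟨K, hK⟩ := hK
  set q := K + z.natAbs
  have hqc : (q : ℤ) ≤ q * c := by exact_mod_cast Nat.le_mul_of_pos_right q hc
  obtain ⟨ν, k, hν⟩ := (hS _).1 (hK (z + q * c).toNat (by omega))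
  obtain ⟨l, k', hl, hlν⟩ := exists_reduced hp hc hrel ν
  set w := ∑ i, l i * b i
  have hN : (w : ℤ) + μ ≤ ∑ i, (((u i + v i - 1) * b i : ℕ) : ℤ) := by
    rw [← Nat.cast_sum]
    exact_mod_cast sum_mul_add_le hl hμ
  set t : ℤ := k' + k - q
  have ht : z = w + t * c := by
    have h := congrArg (Nat.cast : ℕ → ℤ) hν
    rw [Int.toNat_of_nonneg (by omega), hlν] at h
    push_cast at h
    linarith
  have : (-1 : ℤ) < t := by
    refine lt_of_mul_lt_mul_right (a := (c : ℤ)) ?_ (by positivity)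
    linarith
  lift t to ℕ using (by omega) with t'
  exact ⟨_, (hS _).2 ⟨l, t', rfl⟩, by exact_mod_cast ht.symm⟩

theorem isGreatest_of_isPresentation (hP : IsPresentation σ u v p b c)
    (hS : ∀ s, s ∈ S ↔ ∃ (l : ι → ℕ) (k : ℕ), s = ∑ i, l i * b i + k * c)
    (hK : ∃ K, ∀ s ≥ K, s ∈ S) (hσ : ∀ i j, σ.SameCycle i j) (hu : ∀ i, 0 < u i)
    (hp : ∀ i, 0 < p i) (hc : 0 < c) {μ : ℕ} (hμ : IsLeast {x | ∃ j, x = v j * b j} μ) :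
    IsGreatest {z : ℤ | ¬ ∃ s ∈ S, (s : ℤ) = z}
      (∑ i, (((u i + v i - 1) * b i : ℕ) : ℤ) - μ - c) := by
  obtain ⟨⟨j₀, rfl⟩, hμ⟩ := hμ
  have : Nonempty ι := ⟨j₀⟩
  refine ⟨not_exists_mem_eq hP hS hσ hu hp hc j₀, fun z hz => not_lt.1 fun hlt => hz ?_⟩
  exact exists_mem_eq_of_lt hP.relation hS hK hp hc (fun j => hμ ⟨j, rfl⟩) hlt

end Northcott

section Binomial

variable {R ι : Type*} [CommRing R] [Fintype ι]

theorem aeval_X_pow_prod_X_pow (a C : ι → ℕ) :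
    aeval (fun i => (Polynomial.X : Polynomial R) ^ a i) (∏ j, X j ^ C j : MvPolynomial ι R)
      = Polynomial.X ^ ∑ j, C j * a j := by
  simp [map_prod, ← pow_mul, Finset.prod_pow_eq_pow_sum, mul_comm]

theorem prod_X_pow_sub_mem_ker_aeval_iff [Nontrivial R] (a A B : ι → ℕ) :
    (∏ j, X j ^ A j - ∏ j, X j ^ B j : MvPolynomial ι R) ∈
        RingHom.ker (aeval fun i => (Polynomial.X : Polynomial R) ^ a i).toRingHom ↔
      ∑ j, A j * a j = ∑ j, B j * a j := by
  rw [RingHom.mem_ker, AlgHom.toRingHom_eq_coe, RingHom.coe_coe, map_sub,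
    aeval_X_pow_prod_X_pow, aeval_X_pow_prod_X_pow, sub_eq_zero]
  exact ⟨fun h => by simpa using congrArg Polynomial.natDegree h, fun h => by rw [h]⟩

theorem sub_mem_of_prod_X_pow_sub_mem_span [Nontrivial R] [DecidableEq ι]
    (L : Submodule ℤ (ι → ℤ)) {G : Set (MvPolynomial ι R)}
    (hG : ∀ g ∈ G, ∃ E F : ι → ℕ, g = ∏ j, X j ^ E j - ∏ j, X j ^ F j ∧
      (fun j => (E j : ℤ) - F j) ∈ L)
    {A B : ι → ℕ} (h : ∏ j, X j ^ A j - ∏ j, X j ^ B j ∈ Ideal.span G) :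
    (fun j => (A j : ℤ) - B j) ∈ L := by
  -- Send `x^C` to the basis element of the group algebra of `ℤ^ι ⧸ L` indexed by the class of `C`.
  let φ : MvPolynomial ι R →ₐ[R] AddMonoidAlgebra R ((ι → ℤ) ⧸ L) :=
    aeval fun j => AddMonoidAlgebra.single (L.mkQ (Pi.single j 1)) 1
  have hφ (C : ι → ℕ) : φ (∏ j, X j ^ C j) = AddMonoidAlgebra.single (L.mkQ fun j => C j) 1 := by
    simp only [φ, map_prod, map_pow, aeval_X, AddMonoidAlgebra.single_pow, one_pow,
      AddMonoidAlgebra.prod_single, Finset.prod_const_one, ← map_nsmul, ← map_sum]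
    congr 2
    funext j
    simp [Finset.sum_apply, Pi.single_apply]
  have hφ_sub (E F : ι → ℕ) :
      φ (∏ j, X j ^ E j - ∏ j, X j ^ F j) = 0 ↔ (fun j => (E j : ℤ) - F j) ∈ L := by
    rw [map_sub, hφ, hφ, sub_eq_zero, AddMonoidAlgebra.single_left_inj one_ne_zero,
      Submodule.mkQ_apply, Submodule.mkQ_apply, Submodule.Quotient.eq]
    rfl
  have hker : Ideal.span G ≤ RingHom.ker φ := by
    rw [Ideal.span_le]
    intro g hg
    obtain ⟨E, F, rfl, hEF⟩ := hG g hg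
    exact (hφ_sub E F).2 hEF
  exact (hφ_sub A B).1 (hker h)

end Binomial

section NorthcottIdeal

variable {m : ℕ}

theorem ntSig_eq_finRotate (i : Fin m) : ntSig (m + 1) i = finRotate m i := by
  obtain _ | k := m
  · exact i.elim0
  rw [coe_finRotate, ntSig]
  simp [Fin.ext_iff]

theorem ntTau_eq_finRotate_symm (i : Fin m) : ntTau (m + 1) i = (finRotate m).symm i := by
  obtain _ | k := m
  · exact i.elim0
  obtain ⟨j, rfl⟩ := (finRotate _).surjective i
  rw [Equiv.symm_apply_apply, coe_finRotate, ntTau]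
  split_ifs <;> simp_all [Fin.ext_iff]

variable (u : ℕ → ℕ → ℕ)

def ntLeftExp (i : Fin m) : Fin (m + 1) → ℕ :=
  Pi.single i.castSucc (u m i + u (finRotate m i) i)

def ntRightExp (i : Fin m) : Fin (m + 1) → ℕ :=
  Pi.single ((finRotate m).symm i).castSucc (u i ((finRotate m).symm i)) +
    Pi.single (Fin.last m) (u i m)

def ntRelVec (i : Fin m) : Fin (m + 1) → ℤ :=
  fun j => (ntLeftExp u i j : ℤ) - ntRightExp u i j

theorem ntF_eq {K : Type*} [Field K] (hn : 3 ≤ m + 1) (i : Fin m) :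
    ntF K (m + 1) hn u i = ∏ j, X j ^ ntLeftExp u i j - ∏ j, X j ^ ntRightExp u i j := by
  simp only [ntF, ntLeftExp, ntRightExp, Pi.add_apply, pow_add, Finset.prod_mul_distrib,
    Fintype.prod_pow_pi_single, ntSig_eq_finRotate, ntTau_eq_finRotate_symm]
  rfl

theorem ntD_eq {K : Type*} [Field K] (hn : 3 ≤ m + 1) :
    ntD K (m + 1) hn u = ∏ j, X j ^ (Fin.snoc (fun i : Fin m => u m i) 0 : Fin (m + 1) → ℕ) j
      - ∏ j, X j ^ (Pi.single (Fin.last m) (∑ i : Fin m, u i m) : Fin (m + 1) → ℕ) j := by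
  simp only [ntD, Fin.prod_univ_castSucc, Fin.snoc_castSucc, Fin.snoc_last, pow_zero, mul_one,
    Fintype.prod_pow_pi_single]
  rfl

theorem sum_smul_ntRelVec_castSucc (c : Fin m → ℤ) (t : Fin m) :
    (∑ i, c i • ntRelVec u i) t.castSucc =
      c t * (u m t + u (finRotate m t) t) - c (finRotate m t) * u (finRotate m t) t := by
  simp only [Finset.sum_apply, Pi.smul_apply, smul_eq_mul, ntRelVec, ntLeftExp, ntRightExp,
    Pi.add_apply, Pi.single_apply, Fin.castSucc_inj, (Fin.castSucc_lt_last t).ne, if_false,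
    add_zero, Equiv.eq_symm_apply, mul_sub, Finset.sum_sub_distrib, Nat.cast_ite, Nat.cast_zero,
    mul_ite, mul_zero, Finset.sum_ite_eq, Finset.mem_univ, if_true, Equiv.symm_apply_apply]
  push_cast
  ring

theorem sum_smul_ntRelVec_last (c : Fin m → ℤ) :
    (∑ i, c i • ntRelVec u i) (Fin.last m) = -∑ i, c i * u i m := by
  simp [Finset.sum_apply, ntRelVec, ntLeftExp, ntRightExp]

theorem sub_ntD_exp_eq_sum_ntRelVec :
    (fun j => ((Fin.snoc (fun i : Fin m => u m i) 0 : Fin (m + 1) → ℕ) j : ℤ) -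
      (Pi.single (Fin.last m) (∑ i : Fin m, u i m) : Fin (m + 1) → ℕ) j) =
      ∑ i, ntRelVec u i := by
  have h := sum_smul_ntRelVec_castSucc u (fun _ : Fin m => 1)
  have h' := sum_smul_ntRelVec_last u (fun _ : Fin m => 1)
  simp only [one_smul, one_mul] at h h'
  funext j
  induction j using Fin.lastCases with
  | last => simp [h']
  | cast t => simp [h, (Fin.castSucc_lt_last t).ne]

theorem exists_ntIdeal_generator_eq (hn : 3 ≤ m + 1) :
    ∀ g ∈ Set.range (ntF ℚ (m + 1) hn u) ∪ {ntD ℚ (m + 1) hn u}, ∃ E F : Fin (m + 1) → ℕ,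
      g = ∏ j, X j ^ E j - ∏ j, X j ^ F j ∧
        (fun j => (E j : ℤ) - F j) ∈ Submodule.span ℤ (Set.range (ntRelVec u)) := by
  rintro g (⟨i, rfl⟩ | rfl)
  · exact ⟨_, _, ntF_eq u hn i, Submodule.subset_span ⟨i, rfl⟩⟩
  · refine ⟨_, _, ntD_eq u hn, ?_⟩
    rw [sub_ntD_exp_eq_sum_ntRelVec]
    exact Submodule.sum_mem _ fun i _ => Submodule.subset_span ⟨i, rfl⟩

theorem isPresentation_of_ker_eq (hn : 3 ≤ m + 1) (a : Fin (m + 1) → ℕ)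
    (hker : RingHom.ker (aeval (R := ℚ)
        (fun i : Fin (m + 1) => (Polynomial.X : Polynomial ℚ) ^ a i)).toRingHom
      = ntIdeal ℚ (m + 1) hn u) :
    Northcott.IsPresentation (finRotate m) (fun i => u m i) (fun i => u (ntSig (m + 1) i) i)
      (fun i => u i m) (fun i => a i.castSucc) (a (Fin.last m)) := by
  have hv : (fun i : Fin m => u (ntSig (m + 1) i) i) = fun i => u (finRotate m i) i :=
    funext fun i => by rw [ntSig_eq_finRotate]
  rw [hv]
  constructor
  · intro i
    have h : ntF ℚ (m + 1) hn u i ∈ ntIdeal ℚ (m + 1) hn u :=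
      Ideal.subset_span (Or.inl ⟨i, rfl⟩)
    rw [ntF_eq, ← hker, prod_X_pow_sub_mem_ker_aeval_iff] at h
    simpa only [ntLeftExp, ntRightExp, Pi.add_apply, add_mul, Finset.sum_add_distrib,
      Pi.single_apply, ite_mul, zero_mul, Finset.sum_ite_eq', Finset.mem_univ, if_true,
      Equiv.apply_symm_apply] using h
  · intro l l' k k' h
    have hmem : ∏ j, X j ^ (Fin.snoc l k : Fin (m + 1) → ℕ) j
        - ∏ j, X j ^ (Fin.snoc l' k' : Fin (m + 1) → ℕ) j ∈ ntIdeal ℚ (m + 1) hn u := by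
      rw [← hker, prod_X_pow_sub_mem_ker_aeval_iff, Fin.sum_snoc_mul, Fin.sum_snoc_mul, h]
    obtain ⟨cf, hcf⟩ := (Submodule.mem_span_range_iff_exists_fun ℤ).1
      (sub_mem_of_prod_X_pow_sub_mem_span _ (exists_ntIdeal_generator_eq u hn) hmem)
    refine ⟨cf, fun t => ?_, ?_⟩
    · have := congrFun hcf t.castSucc
      rw [sum_smul_ntRelVec_castSucc] at this
      simpa using this.symm
    · have := congrFun hcf (Fin.last m)
      rw [sum_smul_ntRelVec_last] at this
      simpa using this.symm

end NorthcottIdeal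

/-- for a numerical semigroup `S` of Northcott type, with
`N = ∑_{i=1}^{n-1}(u_{ni}+u_{σ(i),i}−1)a_i`, the Frobenius number (the greatest integer not
in `S`) is `N − min_j u_{σ(j),j}a_j − a_n`. -/
theorem northcott_frobenius (n : ℕ) (hn : 3 ≤ n) (u : ℕ → ℕ → ℕ) (hu : ntPos n u)
    (a : Fin n → ℕ) (ha : ∀ i, 0 < a i) (hgcd : Finset.univ.gcd a = 1)
    (hker : RingHom.ker (MvPolynomial.aeval (R := ℚ)
        (fun i : Fin n => (Polynomial.X : Polynomial ℚ) ^ a i)).toRingHom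
      = ntIdeal ℚ n hn u) :
    IsGreatest {z : ℤ | ¬ ∃ s ∈ AddSubmonoid.closure (Set.range a), (s : ℤ) = z}
      ((∑ i : Fin (n - 1), ((u (n - 1) i + u (ntSig n i) i - 1)
            * a (⟨(i : ℕ), by have := i.isLt; omega⟩ : Fin n) : ℕ) : ℤ)
        - (sInf {m : ℕ | ∃ j : Fin (n - 1),
            m = u (ntSig n j) j * a (⟨(j : ℕ), by have := j.isLt; omega⟩ : Fin n)} : ℕ)
        - (a (⟨n - 1, by omega⟩ : Fin n) : ℕ)) := by
  obtain ⟨m, rfl⟩ : ∃ m, n = m + 1 := ⟨n - 1, by omega⟩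
  have hpos (i : Fin m) := hu i i.isLt
  exact Northcott.isGreatest_of_isPresentation (isPresentation_of_ker_eq u hn a hker)
    (mem_closure_range_fin_succ_iff a) (exists_forall_ge_mem_closure_range hgcd)
    (sameCycle_finRotate (by omega)) (fun i => (hpos i).1) (fun i => (hpos i).2.1) (ha _)
    ⟨Nat.sInf_mem ⟨_, ⟨⟨0, by omega⟩, rfl⟩⟩, fun _ => Nat.sInf_le⟩
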